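/- arXiv:2411.11713 — 6 statements merged into one kernel-verified Lean document; each statement's English description precedes it below -/
import Mathlib

section
/- Winner selection is monotone: suppose client e is selected as a winner under Algorithm 1 when the bid profile is (b_1,…,b_E). If client e lowers its bid to b'_e < b_e while all other bids are unchanged (and the client list is re-sorted in nonincreasing order of score per bid accordingly), then e is still selected as a winner. -/
/-!
Winner selection of Algorithm 1 is monotone: clients are indexed in
nonincreasing order of score per bid; a client `e` that is selected as a
winner (i.e. every prefix position up to `e` satisfies the budget-constraint
condition `b j ≤ (R/2)·u j / U({1,…,j})`) is still selected as a winner after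
lowering its bid to `β < b e`, where the clients are re-sorted according to
an arbitrary permutation `σ` putting the new bid profile in nonincreasing
order of score per bid.
-/

theorem winner_selection_monotone
    (E : ℕ) (u b : Fin E → ℝ) (R : ℝ) (hR : 0 < R)
    (hu : ∀ i, 0 < u i) (hb : ∀ i, 0 < b i)
    -- the clients are indexed in nonincreasing order of score per bid
    (hsorted : ∀ i j : Fin E, i ≤ j → u j / b j ≤ u i / b i)
    (e : Fin E)
    -- `e` is selected as a winner under Algorithm 1 with the bids `b`
    (hwin : ∀ j ≤ e, b j ≤ R / 2 * u j / ∑ i ∈ Finset.Iic j, u i)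
    -- `e` lowers its bid to `β < b e`, all other bids unchanged
    (β : ℝ) (hβpos : 0 < β) (hβ : β < b e)
    -- the client list is re-sorted (via the permutation `σ`) so that the new
    -- bid profile is in nonincreasing order of score per bid
    (σ : Equiv.Perm (Fin E))
    (hσ : ∀ i j : Fin E, i ≤ j →
      u (σ j) / Function.update b e β (σ j) ≤
        u (σ i) / Function.update b e β (σ i)) :
    -- then `e` (now at position `σ.symm e`) is still selected as a winner
    ∀ j ≤ σ.symm e,
      Function.update b e β (σ j) ≤
        R / 2 * u (σ j) / ∑ i ∈ Finset.Iic j, u (σ i) := by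
  intro j hj
  set b' : Fin E → ℝ := Function.update b e β with hb'def
  have hb'e : b' e = β := Function.update_self _ _ _
  have hb'pos : ∀ i, 0 < b' i := by
    intro i
    by_cases h : i = e
    · subst h; rw [hb'e]; exact hβpos
    · rw [hb'def, Function.update_of_ne h]; exact hb i
  -- every client appearing in the new prefix has old index ≤ e
  have hsub : ∀ i : Fin E, i ≤ j → σ i ≤ e := by
    intro i hi
    by_cases h : σ i = e
    · exact le_of_eq h
    · by_contra hgt
      push_neg at hgt
      have h1 : u (σ i) / b (σ i) ≤ u e / b e := hsorted e (σ i) hgt.le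
      have h2 : u (σ (σ.symm e)) / b' (σ (σ.symm e)) ≤ u (σ i) / b' (σ i) :=
        hσ i (σ.symm e) (hi.trans hj)
      rw [Equiv.apply_symm_apply] at h2
      rw [hb'e, hb'def, Function.update_of_ne h] at h2
      have h3 : u e / b e < u e / β := div_lt_div_of_pos_left (hu e) hβpos hβ
      linarith
  have hTe : (0:ℝ) < ∑ i ∈ Finset.Iic e, u i :=
    Finset.sum_pos (fun i _ => hu i) ⟨e, Finset.mem_Iic.mpr le_rfl⟩
  have hT : (0:ℝ) < ∑ i ∈ Finset.Iic j, u (σ i) :=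
    Finset.sum_pos (fun i _ => hu (σ i)) ⟨j, Finset.mem_Iic.mpr le_rfl⟩
  -- the new prefix sum is bounded by the old prefix sum at e
  have hsum : ∑ i ∈ Finset.Iic j, u (σ i) ≤ ∑ i ∈ Finset.Iic e, u i := by
    have himg : ∑ i ∈ Finset.Iic j, u (σ i)
        = ∑ m ∈ (Finset.Iic j).image σ, u m := by
      rw [Finset.sum_image (fun a _ c _ h => σ.injective h)]
    rw [himg]
    apply Finset.sum_le_sum_of_subset_of_nonneg
    · intro m hm
      simp only [Finset.mem_image, Finset.mem_Iic] at hm ⊢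
      obtain ⟨i, hi, rfl⟩ := hm
      exact hsub i hi
    · intro i _ _; exact (hu i).le
  -- old winning condition at e, rearranged
  have he : ∑ i ∈ Finset.Iic e, u i ≤ R / 2 * u e / b e := by
    have h := hwin e le_rfl
    rw [le_div_iff₀ hTe] at h
    rw [le_div_iff₀ (hb e)]
    nlinarith [hb e, hTe]
  have hre : R / 2 * u e / b e < R / 2 * u e / β := by
    apply div_lt_div_of_pos_left _ hβpos hβ
    have := hu e; positivity
  have hrσ : u e / β ≤ u (σ j) / b' (σ j) := by
    have h := hσ j (σ.symm e) hj
    rwa [Equiv.apply_symm_apply, hb'e] at h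
  have hchain : ∑ i ∈ Finset.Iic j, u (σ i) ≤ R / 2 * (u (σ j) / b' (σ j)) := by
    have h1 : R / 2 * (u e / β) ≤ R / 2 * (u (σ j) / b' (σ j)) := by
      apply mul_le_mul_of_nonneg_left hrσ (by positivity)
    have h2 : R / 2 * u e / β = R / 2 * (u e / β) := by ring
    linarith
  rw [le_div_iff₀ hT]
  have hbσ := hb'pos (σ j)
  have := mul_le_mul_of_nonneg_left hchain hbσ.le
  calc b' (σ j) * ∑ i ∈ Finset.Iic j, u (σ i)
      ≤ b' (σ j) * (R / 2 * (u (σ j) / b' (σ j))) := this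
    _ = R / 2 * u (σ j) := by field_simp
end

section
/- The bidding mechanism of Algorithm 1 is truthful: for every client e with private true cost c_e > 0, defining e's utility as p_e − c_e if e is selected as a winner (with the winner set and payment computed from the declared bids) and 0 otherwise, declaring the truthful bid b_e = c_e yields utility at least as large as the utility obtained by declaring any other bid b'_e ≠ c_e, for any fixed bids of the other clients. -/
open scoped Classical

/-!
Both utilities are `p - c` or `0`, and `p` does not depend on `e`'s bid, so it suffices that the
truthful bid makes `e` a winner exactly when this is profitable: a win implies `c ≤ p`, and
`c < p` implies a win.

If `e` wins with bid `c`, take the first client `j` of `V^{-e}` that the truthful ranking does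
not place ahead of `e`; it lies among the first `k̂ + 1`, since otherwise the `(k̂ + 1)`-st
client, whose ratio is at least `u_e / c`, would meet its budget constraint. Its ratio is at most
`u_e / c`, and the clients before it weigh no more than those ahead of `e`, so `c ≤ p'_{e(j)}`.

Conversely, `c < p'_{e(j)}` forces every client ranked ahead of `e` to precede `j` in `V^{-e}`, so
`e`'s own constraint follows from `c < β_{e(j)}`; the constraint of any client ahead of `e` is
dominated by that of the last of them in `V^{-e}`, which is one of the first `k̂` clients there.
-/

/-- The budget-constraint condition at position `j` of a list of
scores/bids sorted in nonincreasing order of score per bid: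
`b j ≤ (R/2) · u j / U({1,…,j})`. -/
def winsAt (n : ℕ) (u b : Fin n → ℝ) (R : ℝ) (j : Fin n) : Prop :=
  b j ≤ R / 2 * u j / ∑ i ∈ Finset.Iic j, u i

/-- The client at position `e` is selected as a winner by Algorithm 1:
every position of the prefix ending at `e` satisfies the budget-constraint
condition, so `e` belongs to the longest feasible prefix `S_k`. -/
def isWinner (n : ℕ) (u b : Fin n → ℝ) (R : ℝ) (e : Fin n) : Prop :=
  ∀ j ≤ e, winsAt n u b R j

open Finset

lemma winsAt_iff_sum_le {m : ℕ} {u b : Fin m → ℝ} {R : ℝ} {j : Fin m}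
    (hu : ∀ i, 0 < u i) (hb : 0 < b j) :
    winsAt m u b R j ↔ ∑ i ∈ Iic j, u i ≤ R / 2 * (u j / b j) := by
  have hU : 0 < ∑ i ∈ Iic j, u i := sum_pos (fun i _ => hu i) ⟨j, mem_Iic.2 le_rfl⟩
  rw [winsAt, le_div_iff₀ hU, ← mul_div_assoc, le_div_iff₀ hb, mul_comm (b j)]

lemma le_of_symm_le_of_antitone {m : ℕ} {σ : Equiv.Perm (Fin m)} {g : Fin m → ℝ}
    (hg : Antitone (g ∘ σ)) {x y : Fin m} (hxy : σ.symm x ≤ σ.symm y) : g y ≤ g x := by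
  simpa using hg hxy

section Prefix

variable {n : ℕ} {w r : Fin n → ℝ} {K : ℝ}

lemma exists_ratio_le_and_sum_Iio_add_le (hw : ∀ i, 0 ≤ w i) (hK : 0 ≤ K)
    {A : Finset (Fin n)} {ρ x : ℝ} (hx : 0 ≤ x) (hA : ∀ i ∈ A, ρ ≤ r i)
    (hAc : ∀ i ∉ A, r i ≤ ρ) (hfit : x + ∑ i ∈ A, w i ≤ K * ρ) {v : Fin n}
    (hv : K * r v < ∑ i ∈ Iic v, w i) :
    ∃ j ≤ v, r j ≤ ρ ∧ ∑ i ∈ Iio j, w i + x ≤ K * ρ := by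
  by_cases hout : (Iic v \ A).Nonempty
  · set j := (Iic v \ A).min' hout
    obtain ⟨hjv, hjA⟩ := mem_sdiff.1 ((Iic v \ A).min'_mem hout)
    have hIio : Iio j ⊆ A := fun i hi => by
      by_contra hiA
      refine not_lt_of_ge ((Iic v \ A).min'_le i ?_) (mem_Iio.1 hi)
      exact mem_sdiff.2 ⟨mem_Iic.2 ((mem_Iio.1 hi).le.trans (mem_Iic.1 hjv)), hiA⟩
    refine ⟨j, mem_Iic.1 hjv, hAc j hjA, ?_⟩
    linarith [sum_le_sum_of_subset_of_nonneg hIio fun i _ _ => hw i]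
  · have hIic : Iic v ⊆ A := sdiff_eq_empty_iff_subset.1 (not_nonempty_iff_eq_empty.1 hout)
    have hsum := sum_le_sum_of_subset_of_nonneg hIic fun i _ _ => hw i
    have hρ := mul_le_mul_of_nonneg_left (hA v (hIic (mem_Iic.2 le_rfl))) hK
    linarith

lemma sum_le_mul_ratio_of_forall_lt (hw : ∀ i, 0 ≤ w i) (hr : Antitone r) (hK : 0 ≤ K)
    {v : Fin n} (hv : ∀ j < v, ∑ i ∈ Iic j, w i ≤ K * r j) {P : Finset (Fin n)}
    (hP : ∀ i ∈ P, i < v) {i : Fin n} (hi : i ∈ P) : ∑ k ∈ P, w k ≤ K * r i := by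
  have hne : P.Nonempty := ⟨i, hi⟩
  calc ∑ k ∈ P, w k ≤ ∑ k ∈ Iic (P.max' hne), w k :=
        sum_le_sum_of_subset_of_nonneg (fun k hk => mem_Iic.2 (P.le_max' k hk)) fun k _ _ => hw k
    _ ≤ K * r (P.max' hne) := hv _ (hP _ (P.max'_mem hne))
    _ ≤ K * r i := mul_le_mul_of_nonneg_left (hr (P.le_max' i hi)) hK

end Prefix

section Ranking

variable {n : ℕ}

/-- The positions in `V^{-e}` of the clients other than `e` that the ranking `σ` places at or
before position `s`. -/
def othersUpTo (σ : Equiv.Perm (Fin (n + 1))) (e s : Fin (n + 1)) : Finset (Fin n) :=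
  {i | σ.symm (e.succAbove i) ≤ s}

lemma sum_Iic_comp_perm (σ : Equiv.Perm (Fin (n + 1))) (u : Fin (n + 1) → ℝ)
    (e s : Fin (n + 1)) :
    ∑ i ∈ Iic s, u (σ i) =
      (if σ.symm e ≤ s then u e else 0) + ∑ i ∈ othersUpTo σ e s, u (e.succAbove i) := by
  have hIic : Iic s = ({i | i ≤ s} : Finset (Fin (n + 1))) := by ext; simp
  rw [hIic, sum_filter, othersUpTo, sum_filter,
    ← Equiv.sum_comp σ.symm, Fin.sum_univ_succAbove _ e]
  simp

lemma othersUpTo_mono {σ : Equiv.Perm (Fin (n + 1))} {e s t : Fin (n + 1)} (hst : s ≤ t) :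
    othersUpTo σ e s ⊆ othersUpTo σ e t := by
  intro i hi
  simp only [othersUpTo, mem_filter, mem_univ, true_and] at hi ⊢
  exact hi.trans hst

end Ranking

section Truthful

variable {n : ℕ} {u b : Fin (n + 1) → ℝ} {R c : ℝ} {e : Fin (n + 1)}
  {σ : Equiv.Perm (Fin (n + 1))}

/-- `p'_{e(j)} = min {λ_{e(j)}, β_{e(j)}}` for the client at position `j` (0-based) of
`V^{-e}`. -/
noncomputable def paymentTerm (u b : Fin (n + 1) → ℝ) (R : ℝ) (e : Fin (n + 1)) (j : Fin n) :
    ℝ :=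
  min (u e * b (e.succAbove j) / u (e.succAbove j))
    (R / 2 * u e / ((∑ i ∈ Iio j, u (e.succAbove i)) + u e))

lemma sum_Iio_succAbove_add_pos (hu : ∀ i, 0 < u i) (j : Fin n) :
    0 < ∑ i ∈ Iio j, u (e.succAbove i) + u e :=
  add_pos_of_nonneg_of_pos (sum_nonneg fun _ _ => (hu _).le) (hu e)

lemma le_paymentTerm_iff (hu : ∀ i, 0 < u i) (hc : 0 < c) {j : Fin n}
    (hb : 0 < b (e.succAbove j)) :
    c ≤ paymentTerm u b R e j ↔
      u (e.succAbove j) / b (e.succAbove j) ≤ u e / c ∧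
        ∑ i ∈ Iio j, u (e.succAbove i) + u e ≤ R / 2 * (u e / c) := by
  rw [paymentTerm, le_min_iff, le_div_iff₀ (hu _), div_le_div_iff₀ hb hc, mul_comm c,
    le_div_comm₀ hc (sum_Iio_succAbove_add_pos hu j), mul_div_assoc]

lemma lt_paymentTerm_iff (hu : ∀ i, 0 < u i) (hc : 0 < c) {j : Fin n}
    (hb : 0 < b (e.succAbove j)) :
    c < paymentTerm u b R e j ↔
      u (e.succAbove j) / b (e.succAbove j) < u e / c ∧
        ∑ i ∈ Iio j, u (e.succAbove i) + u e < R / 2 * (u e / c) := by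
  rw [paymentTerm, lt_min_iff, lt_div_iff₀ (hu _), div_lt_div_iff₀ hb hc, mul_comm c,
    lt_div_comm₀ hc (sum_Iio_succAbove_add_pos hu j), mul_div_assoc]

lemma winsAt_succAbove_iff (hu : ∀ i, 0 < u i) {j : Fin n} (hb : 0 < b (e.succAbove j)) :
    winsAt n (u ∘ e.succAbove) (b ∘ e.succAbove) R j ↔
      ∑ i ∈ Iic j, u (e.succAbove i) ≤ R / 2 * (u (e.succAbove j) / b (e.succAbove j)) :=
  winsAt_iff_sum_le (fun _ => hu _) hb

lemma div_le_ratio_of_mem_othersUpTo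
    (hσ : Antitone ((fun x => u x / Function.update b e c x) ∘ σ)) {i : Fin n}
    (hi : i ∈ othersUpTo σ e (σ.symm e)) :
    u e / c ≤ u (e.succAbove i) / b (e.succAbove i) := by
  simp only [othersUpTo, mem_filter, mem_univ, true_and] at hi
  simpa [Fin.succAbove_ne] using le_of_symm_le_of_antitone hσ hi

lemma ratio_le_div_of_not_mem_othersUpTo
    (hσ : Antitone ((fun x => u x / Function.update b e c x) ∘ σ)) {i : Fin n}
    (hi : i ∉ othersUpTo σ e (σ.symm e)) :
    u (e.succAbove i) / b (e.succAbove i) ≤ u e / c := by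
  simp only [othersUpTo, mem_filter, mem_univ, true_and, not_le] at hi
  simpa [Fin.succAbove_ne] using le_of_symm_le_of_antitone hσ hi.le

lemma winsAt_symm_iff (hu : ∀ i, 0 < u i) (hc : 0 < c) :
    winsAt (n + 1) (u ∘ σ) (Function.update b e c ∘ σ) R (σ.symm e) ↔
      u e + ∑ i ∈ othersUpTo σ e (σ.symm e), u (e.succAbove i) ≤ R / 2 * (u e / c) := by
  rw [winsAt_iff_sum_le (u := u ∘ σ) (fun _ => hu _) (by simpa using hc)]
  simp only [Function.comp_apply, Equiv.apply_symm_apply, Function.update_self]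
  rw [sum_Iic_comp_perm, if_pos le_rfl]

lemma winsAt_of_lt_symm_iff (hu : ∀ i, 0 < u i) {s : Fin (n + 1)} (hs : s < σ.symm e)
    {i : Fin n} (hi : e.succAbove i = σ s) (hb : 0 < b (e.succAbove i)) :
    winsAt (n + 1) (u ∘ σ) (Function.update b e c ∘ σ) R s ↔
      ∑ k ∈ othersUpTo σ e s, u (e.succAbove k) ≤
        R / 2 * (u (e.succAbove i) / b (e.succAbove i)) := by
  have hne : σ s ≠ e := hi ▸ Fin.succAbove_ne e i
  rw [winsAt_iff_sum_le (u := u ∘ σ) (fun _ => hu _)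
    (by rwa [Function.comp_apply, Function.update_of_ne hne, ← hi])]
  simp only [Function.comp_apply, Function.update_of_ne hne]
  rw [← hi, sum_Iic_comp_perm, if_neg (not_le.2 hs), zero_add]

lemma le_payment_of_isWinner (hR : 0 < R) (hu : ∀ i, 0 < u i) (hb : ∀ i, i ≠ e → 0 < b i)
    (hc : 0 < c) (hσ : Antitone ((fun x => u x / Function.update b e c x) ∘ σ)) {v : Fin n}
    (hv : ¬ winsAt n (u ∘ e.succAbove) (b ∘ e.succAbove) R v)
    (hwin : isWinner (n + 1) (u ∘ σ) (Function.update b e c ∘ σ) R (σ.symm e)) :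
    c ≤ (Iic v).sup' ⟨v, mem_Iic.2 le_rfl⟩ (paymentTerm u b R e) := by
  have hbo (j : Fin n) : 0 < b (e.succAbove j) := hb _ (Fin.succAbove_ne e j)
  rw [winsAt_succAbove_iff hu (hbo v), not_le] at hv
  obtain ⟨j, hjv, hj⟩ := exists_ratio_le_and_sum_Iio_add_le (fun _ => (hu _).le) (by positivity)
    (hu e).le (fun _ => div_le_ratio_of_mem_othersUpTo hσ)
    (fun _ => ratio_le_div_of_not_mem_othersUpTo hσ)
    ((winsAt_symm_iff hu hc).1 (hwin _ le_rfl)) hv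
  exact le_sup'_of_le _ (mem_Iic.2 hjv) ((le_paymentTerm_iff hu hc (hbo j)).2 hj)

lemma isWinner_of_lt_payment (hR : 0 < R) (hu : ∀ i, 0 < u i) (hb : ∀ i, i ≠ e → 0 < b i)
    (hsorted : Antitone fun j : Fin n => u (e.succAbove j) / b (e.succAbove j)) (hc : 0 < c)
    (hσ : Antitone ((fun x => u x / Function.update b e c x) ∘ σ)) {v : Fin n}
    (hv : ∀ j < v, winsAt n (u ∘ e.succAbove) (b ∘ e.succAbove) R j)
    (hp : c < (Iic v).sup' ⟨v, mem_Iic.2 le_rfl⟩ (paymentTerm u b R e)) :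
    isWinner (n + 1) (u ∘ σ) (Function.update b e c ∘ σ) R (σ.symm e) := by
  have hbo (j : Fin n) : 0 < b (e.succAbove j) := hb _ (Fin.succAbove_ne e j)
  obtain ⟨j, hjv, hj⟩ := (lt_sup'_iff _).1 hp
  obtain ⟨hρ, hfit⟩ := (lt_paymentTerm_iff hu hc (hbo j)).1 hj
  have hahead : othersUpTo σ e (σ.symm e) ⊆ Iio j := fun i hi => mem_Iio.2 <| lt_of_not_ge
    fun hji => (hρ.trans_le (div_le_ratio_of_mem_othersUpTo hσ hi)).not_ge (hsorted hji)
  have hfeas (k : Fin n) (hk : k < j) :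
      ∑ i ∈ Iic k, u (e.succAbove i) ≤ R / 2 * (u (e.succAbove k) / b (e.succAbove k)) :=
    (winsAt_succAbove_iff hu (hbo k)).1 (hv k (hk.trans_le (mem_Iic.1 hjv)))
  intro s hs
  rcases hs.lt_or_eq with hs | rfl
  · have hne : σ s ≠ e := fun h => hs.ne (by rw [← h, Equiv.symm_apply_apply])
    obtain ⟨i, hi⟩ := Fin.exists_succAbove_eq hne
    rw [winsAt_of_lt_symm_iff hu hs hi (hbo i)]
    exact sum_le_mul_ratio_of_forall_lt (fun _ => (hu _).le) hsorted (by positivity) hfeas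
      (fun k hk => mem_Iio.1 (hahead (othersUpTo_mono hs.le hk))) (by simp [othersUpTo, hi])
  · rw [winsAt_symm_iff hu hc]
    linarith [sum_le_sum_of_subset_of_nonneg hahead fun i _ _ => (hu (e.succAbove i)).le]

end Truthful

theorem mechanism_truthful
    (n : ℕ) (u b : Fin (n + 1) → ℝ) (R : ℝ) (hR : 0 < R)
    (hu : ∀ i, 0 < u i)
    (e : Fin (n + 1))
    -- the other clients have positive bids, and are sorted (in the list
    -- `V^{-e}`, i.e. `j ↦ e.succAbove j`) in nonincreasing order of
    -- score per bid
    (hb : ∀ i, i ≠ e → 0 < b i)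
    (hsorted : ∀ i j : Fin n, i ≤ j →
      u (e.succAbove j) / b (e.succAbove j) ≤
        u (e.succAbove i) / b (e.succAbove i))
    -- `e`'s private true cost
    (c : ℝ) (hc : 0 < c)
    -- `v` is the position (0-based) of the first client of `V^{-e}` violating
    -- the budget-constraint condition: the first `k̂ = v` clients satisfy it
    (v : Fin n)
    (hv₁ : ∀ j : Fin n, j < v →
      winsAt n (u ∘ e.succAbove) (b ∘ e.succAbove) R j)
    (hv₂ : ¬ winsAt n (u ∘ e.succAbove) (b ∘ e.succAbove) R v)
    -- the payment `p = p_e = max_{1 ≤ j ≤ k̂+1} min {λ_{e(j)}, β_{e(j)}}`,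
    -- computed from the other clients' bids only
    (p : ℝ)
    (hp : p = (Finset.Iic v).sup' ⟨v, Finset.mem_Iic.2 le_rfl⟩ (fun j =>
      min (u e * b (e.succAbove j) / u (e.succAbove j))
          (R / 2 * u e / ((∑ i ∈ Finset.Iio j, u (e.succAbove i)) + u e)))) :
    -- for every alternative declared bid `β ≠ c`, with the bid profiles
    -- re-sorted in nonincreasing order of score per bid via permutations
    -- `σt` (truthful profile) and `σd` (deviating profile), the utility of the
    -- truthful bid is at least the utility of the deviating bid
    ∀ β : ℝ, β ≠ c → 0 < β →
      ∀ σt σd : Equiv.Perm (Fin (n + 1)),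
        (∀ i j : Fin (n + 1), i ≤ j →
          u (σt j) / Function.update b e c (σt j) ≤
            u (σt i) / Function.update b e c (σt i)) →
        (∀ i j : Fin (n + 1), i ≤ j →
          u (σd j) / Function.update b e β (σd j) ≤
            u (σd i) / Function.update b e β (σd i)) →
        (if isWinner (n + 1) (u ∘ σd) (Function.update b e β ∘ σd) R
            (σd.symm e) then p - c else 0) ≤
        (if isWinner (n + 1) (u ∘ σt) (Function.update b e c ∘ σt) R
            (σt.symm e) then p - c else 0) := by
  intro β _ _ σt σd hst _
  have hσt : Antitone ((fun x => u x / Function.update b e c x) ∘ σt) := fun i j h => hst i j h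
  by_cases hwin : isWinner (n + 1) (u ∘ σt) (Function.update b e c ∘ σt) R (σt.symm e)
  · have hcp : c ≤ p := by
      rw [hp]
      exact le_payment_of_isWinner hR hu hb hc hσt hv₂ hwin
    split_ifs <;> linarith
  · have hpc : p ≤ c := by
      rw [hp]
      exact not_lt.1 fun h =>
        hwin (isWinner_of_lt_payment hR hu hb (fun i j h => hsorted i j h) hc hσt hv₁ h)
    split_ifs <;> linarith
end

section
/- The auction of Algorithm 1 satisfies individual rationality: for every winner e ∈ S_k, the payment satisfies p_e ≥ b_e, i.e. each winner is paid at least its declared bid. -/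
/-- Auxiliary: summing `u ∘ e.succAbove` over `Iio j` when all of `Iio j`
lies strictly below `e`. -/
lemma sum_Iio_succAbove {n : ℕ} (u : Fin (n + 1) → ℝ) (e : Fin (n + 1)) (j : Fin n)
    (h : (j : ℕ) ≤ (e : ℕ)) :
    ∑ i ∈ Finset.Iio j, u (e.succAbove i) = ∑ i ∈ Finset.Iio (j.castSucc), u i := by
  refine Finset.sum_bij (fun a _ => Fin.castSucc a) ?_ ?_ ?_ ?_
  · intro a ha
    simp only [Finset.mem_Iio] at ha ⊢
    exact Fin.castSucc_lt_castSucc_iff.2 ha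
  · intro a _ a' _ hh
    exact Fin.castSucc_injective _ hh
  · intro c hc
    simp only [Finset.mem_Iio] at hc
    have hc' : (c : ℕ) < (j : ℕ) := hc
    exact ⟨⟨c, hc'.trans j.isLt⟩, Finset.mem_Iio.2 (by simpa [Fin.lt_def] using hc'),
      Fin.ext (by simp)⟩
  · intro a ha
    simp only [Finset.mem_Iio] at ha
    congr 1
    apply Fin.succAbove_of_castSucc_lt
    have : (a : ℕ) < (e : ℕ) := lt_of_lt_of_le ha h
    simpa [Fin.lt_def] using this

/-- Auxiliary: summing `u ∘ e.succAbove` over `Iic j` when all of `Iic j`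
lies strictly below `e`. -/
lemma sum_Iic_succAbove {n : ℕ} (u : Fin (n + 1) → ℝ) (e : Fin (n + 1)) (j : Fin n)
    (h : (j : ℕ) < (e : ℕ)) :
    ∑ i ∈ Finset.Iic j, u (e.succAbove i) = ∑ i ∈ Finset.Iic (j.castSucc), u i := by
  refine Finset.sum_bij (fun a _ => Fin.castSucc a) ?_ ?_ ?_ ?_
  · intro a ha
    simp only [Finset.mem_Iic] at ha ⊢
    exact Fin.castSucc_le_castSucc_iff.2 ha
  · intro a _ a' _ hh
    exact Fin.castSucc_injective _ hh
  · intro c hc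
    simp only [Finset.mem_Iic] at hc
    have hc' : (c : ℕ) ≤ (j : ℕ) := hc
    exact ⟨⟨c, lt_of_le_of_lt hc' j.isLt⟩, Finset.mem_Iic.2 (by simpa [Fin.le_def] using hc'),
      Fin.ext (by simp)⟩
  · intro a ha
    simp only [Finset.mem_Iic] at ha
    congr 1
    apply Fin.succAbove_of_castSucc_lt
    have : (a : ℕ) < (e : ℕ) := lt_of_le_of_lt ha h
    simpa [Fin.lt_def] using this

theorem individual_rationality
    (n : ℕ) (u b : Fin (n + 1) → ℝ) (R : ℝ) (hR : 0 < R)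
    (hu : ∀ i, 0 < u i) (hb : ∀ i, 0 < b i)
    -- the clients are indexed in nonincreasing order of score per bid
    (hsorted : ∀ i j : Fin (n + 1), i ≤ j → u j / b j ≤ u i / b i)
    (e : Fin (n + 1))
    -- `e ∈ S_k` is a winner of the auction
    (hwin : isWinner (n + 1) u b R e)
    -- `v` is the position (0-based) of the first client of `V^{-e}`
    -- (the sorted list `j ↦ e.succAbove j` of the other clients) violating the
    -- budget-constraint condition: the first `k̂ = v` clients satisfy it
    (v : Fin n)
    (hv₁ : ∀ j : Fin n, j < v →
      winsAt n (u ∘ e.succAbove) (b ∘ e.succAbove) R j)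
    (hv₂ : ¬ winsAt n (u ∘ e.succAbove) (b ∘ e.succAbove) R v)
    -- the payment `p = p_e = max_{1 ≤ j ≤ k̂+1} min {λ_{e(j)}, β_{e(j)}}`
    (p : ℝ)
    (hp : p = (Finset.Iic v).sup' ⟨v, Finset.mem_Iic.2 le_rfl⟩ (fun j =>
      min (u e * b (e.succAbove j) / u (e.succAbove j))
          (R / 2 * u e / ((∑ i ∈ Finset.Iio j, u (e.succAbove i)) + u e)))) :
    -- the winner is paid at least its declared bid
    b e ≤ p := by
  -- First: the position of `e` is at most `v`, otherwise `hv₂` contradicts `hwin`.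
  have he_le : (e : ℕ) ≤ (v : ℕ) := by
    by_contra hlt
    push_neg at hlt
    apply hv₂
    have hsa : e.succAbove v = v.castSucc :=
      Fin.succAbove_of_castSucc_lt _ _ (by simpa [Fin.lt_def] using hlt)
    unfold winsAt
    simp only [Function.comp_apply, hsa]
    rw [sum_Iic_succAbove u e v hlt]
    exact hwin v.castSucc (by simpa [Fin.le_def] using hlt.le)
  -- `e`'s own position `j* := ⟨e, _⟩` inside `V^{-e}`.
  have hen : (e : ℕ) < n := lt_of_le_of_lt he_le v.isLt
  set j : Fin n := ⟨(e : ℕ), hen⟩ with hj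
  have hjc : j.castSucc = e := Fin.ext rfl
  have hjmem : j ∈ Finset.Iic v := Finset.mem_Iic.2 (Fin.le_def.2 he_le)
  have hsa : e.succAbove j = j.succ :=
    Fin.succAbove_of_le_castSucc _ _ (le_of_eq hjc.symm)
  -- The β-term at `j` equals the winning condition for `e`.
  have hsum : (∑ i ∈ Finset.Iio j, u (e.succAbove i)) + u e = ∑ i ∈ Finset.Iic e, u i := by
    rw [sum_Iio_succAbove u e j le_rfl, hjc, ← Finset.Iio_insert,
      Finset.sum_insert (by simp), add_comm]
  have hβ : b e ≤ R / 2 * u e / ((∑ i ∈ Finset.Iio j, u (e.succAbove i)) + u e) := by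
    rw [hsum]; exact hwin e le_rfl
  -- The λ-term at `j` dominates `b e` by sortedness.
  have hlam : b e ≤ u e * b (e.succAbove j) / u (e.succAbove j) := by
    rw [hsa]
    have hle : e ≤ j.succ := by simp [Fin.le_def, hj]
    have := hsorted e j.succ hle
    rw [div_le_div_iff₀ (hb _) (hb _)] at this
    rw [le_div_iff₀ (hu _)]
    nlinarith [hu e, hb e, hu j.succ, hb j.succ]
  have hmin : b e ≤ min (u e * b (e.succAbove j) / u (e.succAbove j))
      (R / 2 * u e / ((∑ i ∈ Finset.Iio j, u (e.succAbove i)) + u e)) :=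
    le_min hlam hβ
  rw [hp]
  exact le_trans hmin (Finset.le_sup' (fun j => min (u e * b (e.succAbove j) / u (e.succAbove j))
    (R / 2 * u e / ((∑ i ∈ Finset.Iio j, u (e.succAbove i)) + u e))) hjmem)
end

section
/- For every winner e ∈ S_k of Algorithm 1, the payment is bounded by a budget-proportional share of the winner set's total score: p_e ≤ (u_e / U(S_k)) · R. -/
open scoped Classical

theorem payment_upper_bound
    (n : ℕ) (u b : Fin (n + 1) → ℝ) (R : ℝ) (hR : 0 < R)
    (hu : ∀ i, 0 < u i) (hb : ∀ i, 0 < b i)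
    -- the clients are indexed in nonincreasing order of score per bid
    (hsorted : ∀ i j : Fin (n + 1), i ≤ j → u j / b j ≤ u i / b i)
    (e : Fin (n + 1))
    -- `e ∈ S_k` is a winner of the auction
    (hwin : isWinner (n + 1) u b R e)
    -- `v` is the position (0-based) of the first client of `V^{-e}`
    -- (the sorted list `j ↦ e.succAbove j` of the other clients) violating the
    -- budget-constraint condition: the first `k̂ = v` clients satisfy it
    (v : Fin n)
    (hv₁ : ∀ j : Fin n, j < v →
      winsAt n (u ∘ e.succAbove) (b ∘ e.succAbove) R j)
    (hv₂ : ¬ winsAt n (u ∘ e.succAbove) (b ∘ e.succAbove) R v)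
    -- the payment `p = p_e = max_{1 ≤ j ≤ k̂+1} min {λ_{e(j)}, β_{e(j)}}`
    (p : ℝ)
    (hp : p = (Finset.Iic v).sup' ⟨v, Finset.mem_Iic.2 le_rfl⟩ (fun j =>
      min (u e * b (e.succAbove j) / u (e.succAbove j))
          (R / 2 * u e / ((∑ i ∈ Finset.Iio j, u (e.succAbove i)) + u e)))) :
    -- `p_e ≤ (u_e / U(S_k)) · R`, where `S_k` is the winner set
    p ≤ u e /
        (∑ i ∈ Finset.univ.filter (fun i => isWinner (n + 1) u b R i), u i)
      * R := by

  classical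
  set W := Finset.univ.filter (fun i => isWinner (n + 1) u b R i) with hWdef
  have he : e ∈ W := Finset.mem_filter.2 ⟨Finset.mem_univ _, hwin⟩
  have hWne : W.Nonempty := ⟨e, he⟩
  set k := W.max' hWne with hkdef
  have hkW : k ∈ W := W.max'_mem hWne
  have hkwin : isWinner (n + 1) u b R k := (Finset.mem_filter.1 hkW).2
  have hWeq : W = Finset.Iic k := by
    ext i
    simp only [hWdef, Finset.mem_filter, Finset.mem_univ, true_and, Finset.mem_Iic]
    constructor
    · intro hi
      exact W.le_max' i (Finset.mem_filter.2 ⟨Finset.mem_univ _, hi⟩)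
    · intro hi j hj
      exact hkwin j (hj.trans hi)
  have hUpos : 0 < ∑ i ∈ Finset.Iic k, u i :=
    Finset.sum_pos (fun i _ => hu i) ⟨k, Finset.mem_Iic.2 le_rfl⟩
  set U := ∑ i ∈ Finset.Iic k, u i with hUdef
  rw [hp, hWeq, ← hUdef]
  apply Finset.sup'_le
  intro j _
  by_cases hcase : U / 2 ≤ (∑ i ∈ Finset.Iio j, u (e.succAbove i)) + u e
  · refine (min_le_right _ _).trans ?_
    have h1 : R / 2 * u e / ((∑ i ∈ Finset.Iio j, u (e.succAbove i)) + u e)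
        ≤ R / 2 * u e / (U / 2) :=
      div_le_div_of_nonneg_left (mul_nonneg (by linarith) (hu e).le) (by linarith) hcase
    refine h1.trans ?_
    have hU0 : U ≠ 0 := ne_of_gt hUpos
    have heq : R / 2 * u e / (U / 2) = u e / U * R := by field_simp
    exact heq.le
  · push_neg at hcase
    have hsum_lt : (∑ i ∈ Finset.Iio j, u (e.succAbove i)) + u e < U := by linarith
    have hck : e.succAbove j ≤ k := by
      by_contra hgt
      push_neg at hgt
      have hsub : Finset.Iic k ⊆ insert e ((Finset.Iio j).image e.succAbove) := by
        intro i hi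
        rcases eq_or_ne i e with rfl | hne
        · exact Finset.mem_insert_self _ _
        · obtain ⟨i', hi'⟩ := Fin.exists_succAbove_eq hne
          refine Finset.mem_insert_of_mem (Finset.mem_image.2 ⟨i', ?_, hi'⟩)
          rw [Finset.mem_Iio]
          have hlt : e.succAbove i' < e.succAbove j := by
            rw [hi']; exact lt_of_le_of_lt (Finset.mem_Iic.1 hi) hgt
          exact (Fin.succAbove_lt_succAbove_iff).1 hlt
      have hle : U ≤ u e + ∑ i ∈ Finset.Iio j, u (e.succAbove i) := by
        calc U ≤ ∑ i ∈ insert e ((Finset.Iio j).image e.succAbove), u i :=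
              Finset.sum_le_sum_of_subset_of_nonneg hsub (fun i _ _ => (hu i).le)
          _ = u e + ∑ i ∈ (Finset.Iio j).image e.succAbove, u i := by
              refine Finset.sum_insert fun hmem => ?_
              obtain ⟨x, -, hx⟩ := Finset.mem_image.1 hmem
              exact Fin.succAbove_ne e x hx
          _ = u e + ∑ i ∈ Finset.Iio j, u (e.succAbove i) := by
              rw [Finset.sum_image (fun a _ c _ h => Fin.succAbove_right_injective h)]
      linarith
    refine (min_le_left _ _).trans ?_
    have hbu : b (e.succAbove j) / u (e.succAbove j) ≤ b k / u k := by
      rw [div_le_div_iff₀ (hu _) (hu k)]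
      have h2 := hsorted (e.succAbove j) k hck
      rw [div_le_div_iff₀ (hb k) (hb _)] at h2
      linarith
    have hbk : b k / u k ≤ R / 2 / U := by
      have h3 := hkwin k le_rfl
      unfold winsAt at h3
      rw [← hUdef] at h3
      rw [div_le_div_iff₀ (hu k) hUpos]
      rw [le_div_iff₀ hUpos] at h3
      linarith
    have h4 : b (e.succAbove j) / u (e.succAbove j) ≤ R / 2 / U := hbu.trans hbk
    calc u e * b (e.succAbove j) / u (e.succAbove j)
        = u e * (b (e.succAbove j) / u (e.succAbove j)) := by ring
      _ ≤ u e * (R / 2 / U) := mul_le_mul_of_nonneg_left h4 (hu e).le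
      _ = u e / U * (R / 2) := by ring
      _ ≤ u e / U * R := mul_le_mul_of_nonneg_left (by linarith) (le_of_lt (div_pos (hu e) hUpos))
end

section
/- The mechanism of Algorithm 1 is within the budget constraint: the total payment to the winners satisfies Σ_{e∈S_k} p_e ≤ R. -/
open scoped Classical

theorem budget_constraint
    (n : ℕ) (u b : Fin (n + 1) → ℝ) (R : ℝ) (hR : 0 < R)
    (hu : ∀ i, 0 < u i) (hb : ∀ i, 0 < b i)
    -- the clients are indexed in nonincreasing order of score per bid
    (hsorted : ∀ i j : Fin (n + 1), i ≤ j → u j / b j ≤ u i / b i)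
    -- for each winner `e`, `v e` is the position (0-based) of the first
    -- client of `V^{-e}` (the sorted list `j ↦ e.succAbove j` of the clients
    -- other than `e`) violating the budget-constraint condition: the first
    -- `k̂ = v e` clients of `V^{-e}` satisfy it
    (v : Fin (n + 1) → Fin n)
    (hv₁ : ∀ e : Fin (n + 1), isWinner (n + 1) u b R e →
      ∀ j : Fin n, j < v e →
        winsAt n (u ∘ e.succAbove) (b ∘ e.succAbove) R j)
    (hv₂ : ∀ e : Fin (n + 1), isWinner (n + 1) u b R e →
      ¬ winsAt n (u ∘ e.succAbove) (b ∘ e.succAbove) R (v e))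
    -- the payment of each winner `e` is
    -- `p e = max_{1 ≤ j ≤ k̂+1} min {λ_{e(j)}, β_{e(j)}}`
    (p : Fin (n + 1) → ℝ)
    (hp : ∀ e : Fin (n + 1), isWinner (n + 1) u b R e →
      p e = (Finset.Iic (v e)).sup' ⟨v e, Finset.mem_Iic.2 le_rfl⟩ (fun j =>
        min (u e * b (e.succAbove j) / u (e.succAbove j))
            (R / 2 * u e / ((∑ i ∈ Finset.Iio j, u (e.succAbove i)) + u e)))) :
    -- the total payment to the winner set `S_k` is within the budget
    ∑ e ∈ Finset.univ.filter (fun e => isWinner (n + 1) u b R e), p e ≤ R := by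
  classical
  set W := Finset.univ.filter (fun e => isWinner (n + 1) u b R e) with hW
  rcases W.eq_empty_or_nonempty with hWe | hWn
  · rw [hWe, Finset.sum_empty]; exact hR.le
  · set k := W.max' hWn with hk
    have hkW : k ∈ W := W.max'_mem hWn
    have hkwin : isWinner (n + 1) u b R k := (Finset.mem_filter.1 hkW).2
    have hdc : ∀ w : Fin (n + 1), w ≤ k → isWinner (n + 1) u b R w := by
      intro w hwk j hj; exact hkwin j (hj.trans hwk)
    have hWiic : W = Finset.Iic k := by
      ext w
      simp only [hW, Finset.mem_filter, Finset.mem_univ, true_and, Finset.mem_Iic]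
      constructor
      · intro hw; exact W.le_max' w (Finset.mem_filter.2 ⟨Finset.mem_univ _, hw⟩)
      · intro hw; exact hdc w hw
    set T := ∑ i ∈ Finset.Iic k, u i with hT
    have hTpos : 0 < T := Finset.sum_pos (fun i _ => hu i) ⟨k, Finset.mem_Iic.2 le_rfl⟩
    have hbk : b k ≤ R / 2 * u k / T := by
      have := hkwin k le_rfl
      unfold winsAt at this
      rwa [← hT] at this
    have key : ∀ e ∈ W, p e ≤ R / 2 * u e / T := by
      intro e heW
      have hewin : isWinner (n + 1) u b R e := (Finset.mem_filter.1 heW).2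
      have hek : e ≤ k := by
        rw [hWiic] at heW; exact Finset.mem_Iic.1 heW
      rw [hp e hewin]
      apply Finset.sup'_le
      intro j hj
      by_cases hi : e.succAbove j ≤ k
      · refine le_trans (min_le_left _ _) ?_
        set i := e.succAbove j with hidef
        have h1 : u k * b i ≤ u i * b k :=
          (div_le_div_iff₀ (hb k) (hb i)).1 (hsorted i k hi)
        have h2 : b i / u i ≤ b k / u k := by
          rw [div_le_div_iff₀ (hu i) (hu k)]
          nlinarith
        have h3 : b k / u k ≤ (R / 2) / T := by
          rw [div_le_div_iff₀ (hu k) hTpos]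
          have := (le_div_iff₀ hTpos).1 hbk
          nlinarith
        calc u e * b i / u i = u e * (b i / u i) := by ring
          _ ≤ u e * ((R / 2) / T) := by
              exact mul_le_mul_of_nonneg_left (h2.trans h3) (hu e).le
          _ = R / 2 * u e / T := by ring
      · refine le_trans (min_le_right _ _) ?_
        have hST : T ≤ (∑ i ∈ Finset.Iio j, u (e.succAbove i)) + u e := by
          have hsub : (Finset.Iic k).erase e ⊆ (Finset.Iio j).image e.succAbove := by
            intro w hw
            obtain ⟨hwne, hwk⟩ := Finset.mem_erase.1 hw
            obtain ⟨j', hj'⟩ := Fin.exists_succAbove_eq hwne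
            refine Finset.mem_image.2 ⟨j', Finset.mem_Iio.2 ?_, hj'⟩
            rw [← Fin.succAbove_lt_succAbove_iff (p := e)]
            rw [hj']
            exact lt_of_le_of_lt (Finset.mem_Iic.1 hwk) (lt_of_not_ge hi)
          have hsum : ∑ w ∈ (Finset.Iic k).erase e, u w
              ≤ ∑ i ∈ Finset.Iio j, u (e.succAbove i) := by
            rw [← Finset.sum_image (fun x _ y _ h => Fin.succAbove_right_injective h)]
            exact Finset.sum_le_sum_of_subset_of_nonneg hsub (fun w _ _ => (hu w).le)
          have hsplit : ∑ w ∈ (Finset.Iic k).erase e, u w + u e = T := by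
            rw [hT]
            exact Finset.sum_erase_add _ _ (Finset.mem_Iic.2 hek)
          linarith
        exact div_le_div_of_nonneg_left (mul_nonneg (by linarith) (hu e).le) hTpos hST
    calc ∑ e ∈ W, p e ≤ ∑ e ∈ W, R / 2 * u e / T := Finset.sum_le_sum key
      _ = (∑ e ∈ W, u e) * (R / 2) / T := by
          rw [← Finset.sum_div, Finset.sum_mul]
          congr 1
          exact Finset.sum_congr rfl (fun e _ => by ring)
      _ = R / 2 := by
          rw [hWiic, ← hT]
          field_simp
      _ ≤ R := by linarith
end

section
/- PASS partial sums look random to the server: let I ⊆ E be a nonempty proper subset of the clients, and suppose the cross masks are random, i.e. the partial sum of pseudo distributions satisfies Σ_{e∈I} Y_e = Σ_{e∈I} N_e + D where D = Σ_{e∈I} Σ_{v∈E∖I} ε_{e,v}·R_{e,v} and the R_{e,v} are G-valued random variables. If there exists a cross pair (e₀ ∈ I, v₀ ∈ E∖I) such that R_{e₀,v₀} is uniformly distributed on G and is independent of the sum of all the remaining cross masks, then the partial sum Σ_{e∈I} Y_e is uniformly distributed on G. In particular, every aggregate of pseudo distributions other than the full aggregate over all of E reveals nothing about the private distributions, while (by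 antisymmetric cancellation) the full aggregate equals Σ_{e∈E} N_e. -/
/-!
With antisymmetric signs, the mask shared by two clients of `I` enters the
partial sum twice with opposite signs, so `∑_{e ∈ I} Y e = ∑_{e ∈ I} N e ± R_{e₀ v₀} + Drest`
(and for `I = E` every mask cancels). Given `Drest = d`, the partial sum equals `g` exactly when
`R_{e₀ v₀}` takes one prescribed value, an event of probability `P(Drest = d) / |G|` by
independence and uniformity; summing over `d` gives `1 / |G|`.
-/

open Finset MeasureTheory

section Antisymmetric

variable {ι G : Type*} [AddCommGroup G]

theorem Finset.sum_sum_erase_eq_zero_of_antisymm [DecidableEq ι] (S : Finset ι)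
    (f : ι → ι → G) (hf : ∀ e v, e ≠ v → f v e = -f e v) :
    ∑ e ∈ S, ∑ v ∈ S.erase e, f e v = 0 := by
  rw [sum_sigma']
  refine sum_involution (fun p _ => ⟨p.2, p.1⟩) ?_ ?_ ?_ (fun _ _ => rfl)
  · rintro ⟨e, v⟩ hp
    simp only [mem_sigma, mem_erase] at hp
    simp [hf e v (Ne.symm hp.2.1)]
  · rintro ⟨e, v⟩ hp - h
    simp only [mem_sigma, mem_erase] at hp
    exact hp.2.1 (congrArg Sigma.fst h)
  · rintro ⟨e, v⟩ hp
    simp only [mem_sigma, mem_erase] at hp ⊢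
    exact ⟨hp.2.2, Ne.symm hp.2.1, hp.1⟩

theorem Finset.sum_univ_erase_eq_sum_erase_add_sum_compl [Fintype ι] [DecidableEq ι]
    {I : Finset ι} {e : ι} (he : e ∈ I) (g : ι → G) :
    ∑ v ∈ univ.erase e, g v = ∑ v ∈ I.erase e, g v + ∑ v ∈ Iᶜ, g v := by
  rw [sum_erase_eq_sub (mem_univ e), sum_erase_eq_sub he, ← sum_add_sum_compl I]
  abel

theorem Finset.sum_sum_univ_erase_eq_sum_sum_compl [Fintype ι] [DecidableEq ι] (I : Finset ι)
    (f : ι → ι → G) (hf : ∀ e v, e ≠ v → f v e = -f e v) :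
    ∑ e ∈ I, ∑ v ∈ univ.erase e, f e v = ∑ e ∈ I, ∑ v ∈ Iᶜ, f e v := by
  rw [sum_congr rfl fun e he => sum_univ_erase_eq_sum_erase_add_sum_compl he (f e),
    sum_add_distrib, sum_sum_erase_eq_zero_of_antisymm I f hf, zero_add]

theorem sign_smul_antisymm [LinearOrder ι] (R : ι → ι → G) (hR : ∀ e v, R e v = R v e)
    (e v : ι) (hev : e ≠ v) :
    (if v < e then (1 : ℤ) else -1) • R v e = -((if e < v then (1 : ℤ) else -1) • R e v) := by
  rcases hev.lt_or_gt with h | h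
  · simp [h, h.not_gt, hR e v]
  · simp [h, h.not_gt, hR e v]

end Antisymmetric

theorem measure_perm_add_eq_of_uniform_of_indep {Ω G : Type*} [MeasurableSpace Ω]
    (P : Measure Ω) [IsProbabilityMeasure P] [AddCommGroup G] [Fintype G]
    (X D : Ω → G) (φ : Equiv.Perm G) (hD : ∀ d, MeasurableSet {ω | D ω = d})
    (hX : ∀ a, P {ω | X ω = a} = 1 / (Fintype.card G : ENNReal))
    (hXD : ∀ a d, P ({ω | X ω = a} ∩ {ω | D ω = d}) = P {ω | X ω = a} * P {ω | D ω = d})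
    (g : G) :
    P {ω | φ (X ω) + D ω = g} = 1 / (Fintype.card G : ENNReal) := by
  have hfiber (d : G) : D ⁻¹' {d} ∩ {ω | φ (X ω) + D ω = g}
      = {ω | X ω = φ.symm (g - d)} ∩ {ω | D ω = d} := by
    ext ω
    simp only [Set.mem_inter_iff, Set.mem_preimage, Set.mem_singleton_iff, Set.mem_ofPred_eq,
      Equiv.eq_symm_apply, eq_sub_iff_add_eq]
    exact ⟨fun ⟨hd, h⟩ => ⟨hd ▸ h, hd⟩, fun ⟨h, hd⟩ => ⟨hd, hd ▸ h⟩⟩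
  have htotal : ∑ d, P {ω | D ω = d} = 1 := by
    rw [← measure_univ (μ := P), ← Set.preimage_univ (f := D), ← coe_univ]
    exact sum_measure_preimage_singleton _ fun d _ => hD d
  calc P {ω | φ (X ω) + D ω = g}
      = ∑ d, P.restrict {ω | φ (X ω) + D ω = g} (D ⁻¹' {d}) := by
        rw [sum_measure_preimage_singleton _ fun d _ => hD d, coe_univ, Set.preimage_univ,
          Measure.restrict_apply_univ]
    _ = ∑ d, 1 / (Fintype.card G : ENNReal) * P {ω | D ω = d} := by
        refine sum_congr rfl fun d _ => ?_
        rw [Measure.restrict_apply (t := D ⁻¹' {d}) (hD d), hfiber, hXD, hX]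
    _ = 1 / (Fintype.card G : ENNReal) := by rw [← mul_sum, htotal, mul_one]

theorem pass_partial_sum_uniform_general
    {Ω : Type*} [MeasurableSpace Ω] (P : MeasureTheory.Measure Ω)
    [MeasureTheory.IsProbabilityMeasure P]
    (q : ℕ) [NeZero q] (C : ℕ)
    {ι : Type*} [Fintype ι] [LinearOrder ι]
    -- each client `e` holds a fixed private vector `N e ∈ G = (ZMod q)^C`
    (N : ι → Fin C → ZMod q)
    -- the shared `G`-valued random masks, symmetric in the pair
    (Rm : ι → ι → Ω → Fin C → ZMod q)
    (hsymm : ∀ e v : ι, Rm e v = Rm v e)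
    -- the pseudo data distributions
    (Y : ι → Ω → Fin C → ZMod q)
    (hY : ∀ (e : ι) (ω : Ω), Y e ω = N e + ∑ v ∈ Finset.univ.erase e,
      (if e < v then (1 : ℤ) else -1) • Rm e v ω)
    (I : Finset ι)
    (e₀ : ι) (v₀ : ι)
    -- `Drest` is the sum of all the cross masks other than the one of
    -- the pair `(e₀, v₀)`
    (Drest : Ω → Fin C → ZMod q)
    (hDrest : ∀ ω : Ω, Drest ω =
      (∑ e ∈ I, ∑ v ∈ Iᶜ, (if e < v then (1 : ℤ) else -1) • Rm e v ω)
        - (if e₀ < v₀ then (1 : ℤ) else -1) • Rm e₀ v₀ ω)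
    -- measurability of the relevant discrete events
    (hmeasD : ∀ a : Fin C → ZMod q, MeasurableSet {ω | Drest ω = a})
    -- `Rm e₀ v₀` is uniformly distributed on `G`
    (hunif : ∀ a : Fin C → ZMod q,
      P {ω | Rm e₀ v₀ ω = a} = 1 / (Fintype.card (Fin C → ZMod q) : ENNReal))
    -- and independent of the sum of all the remaining cross masks
    (hindep : ∀ a d : Fin C → ZMod q,
      P ({ω | Rm e₀ v₀ ω = a} ∩ {ω | Drest ω = d}) =
        P {ω | Rm e₀ v₀ ω = a} * P {ω | Drest ω = d}) :
    -- then the partial sum `Σ_{e∈I} Y e` is uniformly distributed on `G`,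
    -- while the full aggregate equals `Σ_{e∈E} N e`
    (∀ g : Fin C → ZMod q,
      P {ω | (∑ e ∈ I, Y e ω) = g} =
        1 / (Fintype.card (Fin C → ZMod q) : ENNReal)) ∧
    (∀ ω : Ω, ∑ e, Y e ω = ∑ e, N e) := by
  classical
  have hagg (S : Finset ι) (ω : Ω) : ∑ e ∈ S, Y e ω = ∑ e ∈ S, N e
      + ∑ e ∈ S, ∑ v ∈ Sᶜ, (if e < v then (1 : ℤ) else -1) • Rm e v ω := by
    simp only [hY, sum_add_distrib]
    rw [sum_sum_univ_erase_eq_sum_sum_compl S _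
      (sign_smul_antisymm (Rm · · ω) fun e v => congrFun (hsymm e v) ω)]
  refine ⟨fun g => ?_, fun ω => by simp [hagg univ ω]⟩
  let ε : ℤˣ := if e₀ < v₀ then 1 else -1
  have hε : (ε : ℤ) = if e₀ < v₀ then 1 else -1 := by simp only [ε]; split_ifs <;> rfl
  have hevent : {ω | ∑ e ∈ I, Y e ω = g}
      = {ω | MulAction.toPerm ε (Rm e₀ v₀ ω) + Drest ω = g - ∑ e ∈ I, N e} := by
    ext ω
    rw [Set.mem_ofPred_eq, Set.mem_ofPred_eq, MulAction.toPerm_apply, Units.smul_def, hε,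
      hagg I ω, hDrest ω, eq_sub_iff_add_eq, add_sub_cancel, add_comm]
  rw [hevent]
  exact measure_perm_add_eq_of_uniform_of_indep P _ _ _ hmeasD hunif hindep _

theorem pass_partial_sum_uniform
    {Ω : Type*} [MeasurableSpace Ω] (P : MeasureTheory.Measure Ω)
    [MeasureTheory.IsProbabilityMeasure P]
    (q : ℕ) [NeZero q] (C : ℕ) (hC : 1 ≤ C)
    {ι : Type*} [Fintype ι] [LinearOrder ι]
    (hE : 2 ≤ Fintype.card ι)
    -- each client `e` holds a fixed private vector `N e ∈ G = (ZMod q)^C`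
    (N : ι → Fin C → ZMod q)
    -- the shared `G`-valued random masks, symmetric in the pair
    (Rm : ι → ι → Ω → Fin C → ZMod q)
    (hsymm : ∀ e v : ι, Rm e v = Rm v e)
    -- the pseudo data distributions
    (Y : ι → Ω → Fin C → ZMod q)
    (hY : ∀ (e : ι) (ω : Ω), Y e ω = N e + ∑ v ∈ Finset.univ.erase e,
      (if e < v then (1 : ℤ) else -1) • Rm e v ω)
    -- `I` is a nonempty proper subset of the clients
    (I : Finset ι) (hne : I.Nonempty) (hproper : I ≠ Finset.univ)
    -- a cross pair `(e₀ ∈ I, v₀ ∈ E∖I)`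
    (e₀ : ι) (he₀ : e₀ ∈ I) (v₀ : ι) (hv₀ : v₀ ∉ I)
    -- `Drest` is the sum of all the cross masks other than the one of
    -- the pair `(e₀, v₀)`
    (Drest : Ω → Fin C → ZMod q)
    (hDrest : ∀ ω : Ω, Drest ω =
      (∑ e ∈ I, ∑ v ∈ Iᶜ, (if e < v then (1 : ℤ) else -1) • Rm e v ω)
        - (if e₀ < v₀ then (1 : ℤ) else -1) • Rm e₀ v₀ ω)
    -- measurability of the relevant discrete events
    (hmeasR : ∀ a : Fin C → ZMod q, MeasurableSet {ω | Rm e₀ v₀ ω = a})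
    (hmeasD : ∀ a : Fin C → ZMod q, MeasurableSet {ω | Drest ω = a})
    -- `Rm e₀ v₀` is uniformly distributed on `G`
    (hunif : ∀ a : Fin C → ZMod q,
      P {ω | Rm e₀ v₀ ω = a} = 1 / (Fintype.card (Fin C → ZMod q) : ENNReal))
    -- and independent of the sum of all the remaining cross masks
    (hindep : ∀ a d : Fin C → ZMod q,
      P ({ω | Rm e₀ v₀ ω = a} ∩ {ω | Drest ω = d}) =
        P {ω | Rm e₀ v₀ ω = a} * P {ω | Drest ω = d}) :
    -- then the partial sum `Σ_{e∈I} Y e` is uniformly distributed on `G`,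
    -- while the full aggregate equals `Σ_{e∈E} N e`
    (∀ g : Fin C → ZMod q,
      P {ω | (∑ e ∈ I, Y e ω) = g} =
        1 / (Fintype.card (Fin C → ZMod q) : ENNReal)) ∧
    (∀ ω : Ω, ∑ e, Y e ω = ∑ e, N e) :=
  pass_partial_sum_uniform_general P q C N Rm hsymm Y hY I e₀ v₀ Drest hDrest hmeasD hunif hindep
end
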